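/- Fix a $\lambda$-tableau $\t_0$ and a bicomposition $(\alpha|\beta)$ of $n$, and let $\mathscr{C} = \{d \in \mathrm{Sym}_n : d^{-1} C_{\t_0} d \cap \mathrm{Sym}_{\alpha|\beta} \subseteq \mathrm{Sym}_{\beta}^{+|\alpha|}\}$. For $d \in \mathrm{Sym}_n$, the following are equivalent: (a) $d \in \mathscr{C}$; (b) $\mathrm{stab}_{C_{\t_0}}(\mathrm{T}_d) \subseteq d\,\mathrm{Sym}_\beta^{+|\alpha|}\,d^{-1}$; (c) whenever $\mathrm{T}_d(i,j) = \mathrm{T}_d(i',j)$ for nodes $(i,j),(i',j) \in [\lambda]$ with $i \ne i'$, the common value is one of the colours $\mathbf{d}_k$. -/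

import Mathlib

namespace SignedYoung
open Equiv Finset
open scoped Classical

abbrev Sym (n : ℕ) := Equiv.Perm (Fin n)

/-- Index of the block of the composition `γ` containing position `i` (0-based). -/
def blockOf (γ : List ℕ) (i : ℕ) : ℕ :=
  (List.range γ.length).countP (fun j => decide ((γ.take (j + 1)).sum ≤ i))

/-- The Young subgroup of `Sym n` associated to the composition `γ`. -/
def youngSubgroup (n : ℕ) (γ : List ℕ) : Subgroup (Sym n) where
  carrier := {σ | ∀ i : Fin n, blockOf γ (σ i) = blockOf γ i}
  one_mem' := by intro i; simp
  mul_mem' := by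
    intro a b ha hb i
    simp only [Equiv.Perm.mul_apply]
    rw [ha, hb]
  inv_mem' := by
    intro a ha i
    have h := ha (a⁻¹ i)
    have e : a (a⁻¹ i) = i := by simp
    rw [e] at h
    exact h.symm

/-- The subgroup `Sym_α` of the Young subgroup `Sym_{α|β}`: block-preserving permutations
fixing all points `≥ |α|`. -/
def symA (n : ℕ) (α β : List ℕ) : Set (Sym n) :=
  {σ | σ ∈ youngSubgroup n (α ++ β) ∧ ∀ i : Fin n, α.sum ≤ (i : ℕ) → σ i = i}

/-- The subgroup `Sym_β^{+|α|}`: block-preserving permutations fixing all points `< |α|`. -/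
def symB (n : ℕ) (α β : List ℕ) : Set (Sym n) :=
  {σ | σ ∈ youngSubgroup n (α ++ β) ∧ ∀ i : Fin n, (i : ℕ) < α.sum → σ i = i}

/-- Cells of the Young diagram of the composition `lam`. -/
abbrev Cell (lam : List ℕ) := (i : Fin lam.length) × Fin (lam.get i)

/-- A `lam`-tableau: a bijective labelling of the cells by `1, …, n` (here `Fin n`). -/
abbrev Tab (n : ℕ) (lam : List ℕ) := Cell lam ≃ Fin n

/-- The row stabilizer of a tableau. -/
def rowStab {n : ℕ} {lam : List ℕ} (t : Tab n lam) : Set (Sym n) :=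
  {σ | ∀ a : Fin n, (t.symm (σ a)).1 = (t.symm a).1}

/-- The column stabilizer of a tableau. -/
def colStab {n : ℕ} {lam : List ℕ} (t : Tab n lam) : Set (Sym n) :=
  {σ | ∀ a : Fin n, ((t.symm (σ a)).2 : ℕ) = ((t.symm a).2 : ℕ)}

/-- Colours `c_1 < c_2 < ⋯ < d_1 < d_2 < ⋯` (0-based). -/
abbrev Colour := Lex (ℕ ⊕ ℕ)

def cCol (k : ℕ) : Colour := toLex (Sum.inl k)

def dCol (k : ℕ) : Colour := toLex (Sum.inr k)

/-- `T` is a `lam`-tableau of type `(α|β)`: exactly `α_k` cells of colour `c_k` and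
`β_k` of colour `d_k`. -/
def HasType {lam : List ℕ} (α β : List ℕ) (T : Cell lam → Colour) : Prop :=
  (∀ k : ℕ, (Finset.univ.filter fun c => T c = cCol k).card = α.getD k 0) ∧
  (∀ k : ℕ, (Finset.univ.filter fun c => T c = dCol k).card = β.getD k 0)

/-- The colour of the number `i` under the canonical colouring by `(α|β)`. -/
def colourOfIdx (α β : List ℕ) (i : ℕ) : Colour :=
  if blockOf (α ++ β) i < α.length then cCol (blockOf (α ++ β) i)
  else dCol (blockOf (α ++ β) i - α.length)

/-- The canonical `lam`-tableau of type `(α|β)` associated to the tableau `t0`. -/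
def canonT {n : ℕ} {lam : List ℕ} (t0 : Tab n lam) (α β : List ℕ) : Cell lam → Colour :=
  fun c => colourOfIdx α β (t0 c)

/-- The action `σ · T = T ∘ t0⁻¹ ∘ σ⁻¹ ∘ t0` of `Sym n` on tableaux of type `(α|β)`,
through the fixed tableau `t0`. -/
def actT {n : ℕ} {lam : List ℕ} (t0 : Tab n lam) (σ : Sym n) (T : Cell lam → Colour) :
    Cell lam → Colour :=
  fun c => T (t0.symm (σ⁻¹ (t0 c)))

/-- `T_d = d · T_0`. -/
def TOf {n : ℕ} {lam : List ℕ} (t0 : Tab n lam) (α β : List ℕ) (d : Sym n) :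
    Cell lam → Colour :=
  actT t0 d (canonT t0 α β)

def RowSemistd {lam : List ℕ} (T : Cell lam → Colour) : Prop :=
  ∀ c c' : Cell lam, c.1 = c'.1 → (c.2 : ℕ) < (c'.2 : ℕ) → T c ≤ T c'

def ColSemistd {lam : List ℕ} (T : Cell lam → Colour) : Prop :=
  ∀ c c' : Cell lam, (c.2 : ℕ) = (c'.2 : ℕ) → c.1 < c'.1 → T c ≤ T c'

/-- Repeats in a row occur only for colours `c_k`. -/
def RowRepeatC {lam : List ℕ} (T : Cell lam → Colour) : Prop :=
  ∀ c c' : Cell lam, c.1 = c'.1 → (c.2 : ℕ) ≠ (c'.2 : ℕ) → T c = T c' → ∃ k, T c = cCol k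

/-- Repeats in a column occur only for colours `d_k`. -/
def ColRepeatD {lam : List ℕ} (T : Cell lam → Colour) : Prop :=
  ∀ c c' : Cell lam, (c.2 : ℕ) = (c'.2 : ℕ) → c.1 ≠ c'.1 → T c = T c' → ∃ k, T c = dCol k

def IsSemistd {lam : List ℕ} (T : Cell lam → Colour) : Prop :=
  RowSemistd T ∧ ColSemistd T ∧ RowRepeatC T ∧ ColRepeatD T

/-- A standard tableau: strictly increasing along rows and down columns. -/
def IsStd {n : ℕ} {lam : List ℕ} (t : Tab n lam) : Prop :=
  (∀ c c' : Cell lam, c.1 = c'.1 → (c.2 : ℕ) < (c'.2 : ℕ) → t c < t c') ∧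
  (∀ c c' : Cell lam, (c.2 : ℕ) = (c'.2 : ℕ) → c.1 < c'.1 → t c < t c')

def IsPartition (n : ℕ) (lam : List ℕ) : Prop :=
  lam.Pairwise (· ≥ ·) ∧ (∀ x ∈ lam, 0 < x) ∧ lam.sum = n

def IsBicomp (n : ℕ) (α β : List ℕ) : Prop :=
  (∀ x ∈ α, 0 < x) ∧ (∀ x ∈ β, 0 < x) ∧ α.sum + β.sum = n

/-- `𝒮 = {d : d⁻¹ R_{t0} d ∩ Sym_{α|β} ⊆ Sym_α}`. -/
def RSet {n : ℕ} {lam : List ℕ} (t0 : Tab n lam) (α β : List ℕ) : Set (Sym n) :=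
  {d | ∀ σ ∈ rowStab t0, d⁻¹ * σ * d ∈ youngSubgroup n (α ++ β) →
    d⁻¹ * σ * d ∈ symA n α β}

/-- `𝒞 = {d : d⁻¹ C_{t0} d ∩ Sym_{α|β} ⊆ Sym_β^{+|α|}}`. -/
def CSet {n : ℕ} {lam : List ℕ} (t0 : Tab n lam) (α β : List ℕ) : Set (Sym n) :=
  {d | ∀ σ ∈ colStab t0, d⁻¹ * σ * d ∈ youngSubgroup n (α ++ β) →
    d⁻¹ * σ * d ∈ symB n α β}

/-- The double coset `R_{t0} x Sym_{α|β}`. -/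
def dCoset {n : ℕ} {lam : List ℕ} (t0 : Tab n lam) (α β : List ℕ) (x : Sym n) :
    Set (Sym n) :=
  {ω | ∃ τ ∈ rowStab t0, ∃ ξ ∈ youngSubgroup n (α ++ β), ω = τ * x * ξ}

/-- The double coset `C_{t0} x Sym_{α|β}`. -/
def cCoset {n : ℕ} {lam : List ℕ} (t0 : Tab n lam) (α β : List ℕ) (x : Sym n) :
    Set (Sym n) :=
  {ω | ∃ σ ∈ colStab t0, ∃ ξ ∈ youngSubgroup n (α ++ β), ω = σ * x * ξ}

/-- `ε` is the sign function `ε_𝔡` on the double coset `R_{t0} 𝔡 Sym_{α|β}`: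
`ε(τ 𝔡 ξ_α ξ_β^{+|α|}) = sgn ξ_β`. -/
def IsEps {n : ℕ} {lam : List ℕ} (t0 : Tab n lam) (α β : List ℕ) (𝔡 : Sym n)
    (ε : Sym n → ℤ) : Prop :=
  ∀ τ ∈ rowStab t0, ∀ ξa ∈ symA n α β, ∀ ξb ∈ symB n α β,
    ε (τ * 𝔡 * (ξa * ξb)) = (Equiv.Perm.sign ξb : ℤ)

/-- The coefficient `𝔞_{d,𝔡} = ∑_{σ ∈ C_{t0}, σd ∈ R_{t0} 𝔡 Sym_{α|β}} sgn(σ) ε_𝔡(σ d)`. -/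
noncomputable def coeffA {n : ℕ} {lam : List ℕ} (t0 : Tab n lam) (α β : List ℕ)
    (ε : Sym n → ℤ) (d 𝔡 : Sym n) : ℤ :=
  ∑ σ : Sym n, if σ ∈ colStab t0 ∧ σ * d ∈ dCoset t0 α β 𝔡
    then (Equiv.Perm.sign σ : ℤ) * ε (σ * d) else 0

/-- The multiset of colours in column `j` of `T`. -/
def colMul {lam : List ℕ} (T : Cell lam → Colour) (j : ℕ) : Multiset Colour :=
  (Finset.univ.filter fun c : Cell lam => (c.2 : ℕ) = j).val.map T

noncomputable def sortedCol (m : Multiset Colour) : List Colour := m.sort (· ≤ ·)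

/-- Comparison of column multisets: the sorted lists agree up to position `k`, where
the first is larger. -/
def msGT (m m' : Multiset Colour) : Prop :=
  ∃ k, (∀ s, s < k → (sortedCol m).getD s (cCol 0) = (sortedCol m').getD s (cCol 0)) ∧
    (sortedCol m').getD k (cCol 0) < (sortedCol m).getD k (cCol 0)

/-- The strict column-dominance order `T ⊳ T'`. -/
def TabGT {lam : List ℕ} (T T' : Cell lam → Colour) : Prop :=
  ∃ t, (∀ j, j < t → colMul T j = colMul T' j) ∧ msGT (colMul T t) (colMul T' t)

/-- The column-dominance pre-order `T ⊵ T'`. -/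
def TabGE {lam : List ℕ} (T T' : Cell lam → Colour) : Prop :=
  (∀ j, colMul T j = colMul T' j) ∨ TabGT T T'

/-! `T_d` colours the cell holding `m` by the block of `d⁻¹ m`, so `σ` fixes `T_d` exactly when
`d⁻¹ σ d ∈ Sym_{α|β}`. A repeated colour `c_k` in a column gives the transposition of the two
entries: it lies in `C_{t0}`, and its conjugate by `d` is a transposition in `Sym_{α|β}` moving a
point `< |α|`. Conversely, if `σ ∈ C_{t0}` and `d⁻¹ σ d ∈ Sym_{α|β}` moves `i < |α|`, the cells
holding `d i` and `σ (d i)` form such a column repeat. -/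

lemma le_blockOf_iff {γ : List ℕ} {i k : ℕ} (hk : k ≤ γ.length) :
    k ≤ blockOf γ i ↔ (γ.take k).sum ≤ i := by
  -- the counted condition `(γ.take (j + 1)).sum ≤ i` is downward closed in `j`
  have hmono := List.monotone_sum_take γ
  unfold blockOf
  constructor
  · intro hle
    by_contra! hlt
    obtain ⟨m, rfl⟩ : ∃ m, k = m + 1 :=
      Nat.exists_eq_add_one.mpr (Nat.pos_of_ne_zero fun hk0 => by simp [hk0] at hlt)
    rw [← Nat.add_sub_of_le (by omega : m ≤ γ.length), List.range_add,
      List.countP_append] at hle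
    have htail : (List.map (fun x => m + x) (List.range (γ.length - m))).countP
        (fun j => decide ((γ.take (j + 1)).sum ≤ i)) = 0 := by
      refine List.countP_eq_zero.mpr fun j hj => ?_
      obtain ⟨x, -, rfl⟩ := List.mem_map.mp hj
      have : (γ.take (m + 1)).sum ≤ (γ.take (m + x + 1)).sum := hmono (by omega)
      simp only [decide_eq_true_eq]
      omega
    have := (List.range m).countP_le_length (p := fun j => decide ((γ.take (j + 1)).sum ≤ i))
    simp only [List.length_range] at this
    omega
  · intro hle
    rw [← Nat.add_sub_of_le hk, List.range_add, List.countP_append]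
    have hhead : (List.range k).countP (fun j => decide ((γ.take (j + 1)).sum ≤ i)) = k := by
      rw [List.countP_eq_length.mpr, List.length_range]
      intro j hj
      have : (γ.take (j + 1)).sum ≤ (γ.take k).sum :=
        hmono (Nat.succ_le_of_lt (List.mem_range.mp hj))
      simp only [decide_eq_true_eq]
      omega
    omega

lemma blockOf_append_lt_length_iff (α β : List ℕ) (i : ℕ) :
    blockOf (α ++ β) i < α.length ↔ i < α.sum := by
  rw [← not_le, ← not_le, le_blockOf_iff (by simp), List.take_left' rfl]

lemma colourOfIdx_eq_iff (α β : List ℕ) (x y : ℕ) :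
    colourOfIdx α β x = colourOfIdx α β y ↔ blockOf (α ++ β) x = blockOf (α ++ β) y := by
  unfold colourOfIdx
  split_ifs <;> simp [cCol, dCol] <;> omega

lemma exists_colourOfIdx_eq_dCol_iff (α β : List ℕ) (i : ℕ) :
    (∃ k, colourOfIdx α β i = dCol k) ↔ α.sum ≤ i := by
  rw [← not_lt, ← blockOf_append_lt_length_iff α β i]
  unfold colourOfIdx
  split_ifs <;> simp [cCol, dCol, *]

lemma cell_fst_ne_of_snd_eq {lam : List ℕ} {c c' : Cell lam} (hcol : (c.2 : ℕ) = (c'.2 : ℕ))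
    (hne : c ≠ c') : c.1 ≠ c'.1 := by
  obtain ⟨r, j⟩ := c
  obtain ⟨r', j'⟩ := c'
  intro hrow
  dsimp at hrow hcol
  subst hrow
  exact hne (by rw [Fin.ext hcol])

lemma swap_mem_colStab {n : ℕ} {lam : List ℕ} (t : Tab n lam) {c c' : Cell lam}
    (hcol : (c.2 : ℕ) = (c'.2 : ℕ)) : swap (t c) (t c') ∈ colStab t := by
  intro x
  rcases eq_or_ne x (t c) with rfl | hxc
  · rw [swap_apply_left, t.symm_apply_apply, t.symm_apply_apply, hcol]
  rcases eq_or_ne x (t c') with rfl | hxc'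
  · rw [swap_apply_right, t.symm_apply_apply, t.symm_apply_apply, hcol]
  · rw [swap_apply_of_ne_of_ne hxc hxc']

lemma swap_mem_youngSubgroup_iff {n : ℕ} (γ : List ℕ) (x y : Fin n) :
    swap x y ∈ youngSubgroup n γ ↔ blockOf γ x = blockOf γ y := by
  refine ⟨fun h => by simpa using (h x).symm, fun h i => ?_⟩
  rcases eq_or_ne i x with rfl | hix
  · simp [h]
  rcases eq_or_ne i y with rfl | hiy
  · simp [h]
  · rw [swap_apply_of_ne_of_ne hix hiy]

lemma exists_conj_mem_iff {G : Type*} [Group G] (S : Set G) (d x : G) :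
    (∃ ξ ∈ S, x = d * ξ * d⁻¹) ↔ d⁻¹ * x * d ∈ S := by
  constructor
  · rintro ⟨ξ, hξ, rfl⟩
    simpa [mul_assoc] using hξ
  · exact fun h => ⟨_, h, by group⟩

section TOf

variable {n : ℕ} {lam : List ℕ} (t0 : Tab n lam) (α β : List ℕ)

lemma TOf_apply (d : Sym n) (c : Cell lam) :
    TOf t0 α β d c = colourOfIdx α β (d⁻¹ (t0 c)) := by
  simp [TOf, actT, canonT]

lemma actT_TOf (σ d : Sym n) : actT t0 σ (TOf t0 α β d) = TOf t0 α β (σ * d) := by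
  funext c
  simp [TOf_apply, actT, mul_inv_rev]

lemma TOf_eq_TOf_iff (d d' : Sym n) :
    TOf t0 α β d' = TOf t0 α β d ↔ d⁻¹ * d' ∈ youngSubgroup n (α ++ β) := by
  rw [← inv_mem_iff, mul_inv_rev, inv_inv, funext_iff, ← t0.symm.forall_congr_right]
  simp only [TOf_apply, Equiv.apply_symm_apply, colourOfIdx_eq_iff]
  rw [← d.forall_congr_right]
  simp only [Perm.coe_inv, Equiv.symm_apply_apply]
  exact Iff.rfl

lemma actT_TOf_eq_self_iff (σ d : Sym n) :
    actT t0 σ (TOf t0 α β d) = TOf t0 α β d ↔ d⁻¹ * σ * d ∈ youngSubgroup n (α ++ β) := by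
  rw [actT_TOf, TOf_eq_TOf_iff, mul_assoc]

lemma mem_CSet_iff_stab_subset (d : Sym n) :
    d ∈ CSet t0 α β ↔
      {σ | σ ∈ colStab t0 ∧ actT t0 σ (TOf t0 α β d) = TOf t0 α β d} ⊆
        {x | ∃ ξ ∈ symB n α β, x = d * ξ * d⁻¹} := by
  simp only [CSet, Set.mem_ofPred_eq, Set.ofPred_subset_ofPred, actT_TOf_eq_self_iff,
    exists_conj_mem_iff, and_imp]

lemma mem_CSet_iff_colRepeatD (d : Sym n) : d ∈ CSet t0 α β ↔ ColRepeatD (TOf t0 α β d) := by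
  constructor
  · intro hd c c' hcol hrow heq
    have hconj : d⁻¹ * swap (t0 c) (t0 c') * d = swap (d⁻¹ (t0 c)) (d⁻¹ (t0 c')) := by
      rw [swap_apply_apply, inv_inv]
    have hyoung : d⁻¹ * swap (t0 c) (t0 c') * d ∈ youngSubgroup n (α ++ β) := by
      rw [hconj, swap_mem_youngSubgroup_iff]
      rwa [TOf_apply, TOf_apply, colourOfIdx_eq_iff] at heq
    have hB := hd _ (swap_mem_colStab t0 hcol) hyoung
    rw [TOf_apply, exists_colourOfIdx_eq_dCol_iff]
    by_contra! hlt
    have hfix := hB.2 _ hlt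
    rw [hconj, swap_apply_left] at hfix
    exact hrow (congrArg Sigma.fst (t0.injective (d⁻¹.injective hfix.symm)))
  · intro h σ hσ hy
    refine ⟨hy, fun i hi => ?_⟩
    by_contra hmoved
    set c := t0.symm (d i)
    set c' := t0.symm (σ (d i))
    have hcol : (c.2 : ℕ) = (c'.2 : ℕ) := (hσ (d i)).symm
    have hTc : TOf t0 α β d c = colourOfIdx α β i := by simp [TOf_apply, c]
    have hTc' : TOf t0 α β d c' = colourOfIdx α β ((d⁻¹ * σ * d) i) := by simp [TOf_apply, c']
    have heq : TOf t0 α β d c = TOf t0 α β d c' := by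
      rw [hTc, hTc', colourOfIdx_eq_iff]
      exact (hy i).symm
    have hrow : c.1 ≠ c'.1 := by
      refine cell_fst_ne_of_snd_eq hcol fun hcc' => hmoved ?_
      simp [← t0.symm.injective hcc']
    obtain ⟨k, hk⟩ := h c c' hcol hrow heq
    rw [hTc] at hk
    exact absurd ((exists_colourOfIdx_eq_dCol_iff α β i).mp ⟨k, hk⟩) (not_le.mpr hi)

end TOf

theorem mem_CSet_iff_general (n : ℕ) (lam : List ℕ)
    (α β : List ℕ) (t0 : Tab n lam) (d : Sym n) :
    (d ∈ CSet t0 α β ↔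
      {σ | σ ∈ colStab t0 ∧ actT t0 σ (TOf t0 α β d) = TOf t0 α β d} ⊆
        {x | ∃ ξ ∈ symB n α β, x = d * ξ * d⁻¹}) ∧
    (d ∈ CSet t0 α β ↔
      ∀ c c' : Cell lam, (c.2 : ℕ) = (c'.2 : ℕ) → c.1 ≠ c'.1 →
        TOf t0 α β d c = TOf t0 α β d c' → ∃ k, TOf t0 α β d c = dCol k) :=
  ⟨mem_CSet_iff_stab_subset t0 α β d, mem_CSet_iff_colRepeatD t0 α β d⟩

/-- **Characterisation of `𝒞` (Lemma on `𝒞`).** For `d ∈ Sym n` the following are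
equivalent: (a) `d ∈ 𝒞`; (b) `stab_{C_{t0}}(T_d) ⊆ d Sym_β^{+|α|} d⁻¹`; (c) any repeated
colour in a column of `T_d` is one of the colours `d_k`. -/
theorem mem_CSet_iff (n : ℕ) (lam : List ℕ) (hl : IsPartition n lam)
    (α β : List ℕ) (hab : IsBicomp n α β) (t0 : Tab n lam) (d : Sym n) :
    (d ∈ CSet t0 α β ↔
      {σ | σ ∈ colStab t0 ∧ actT t0 σ (TOf t0 α β d) = TOf t0 α β d} ⊆
        {x | ∃ ξ ∈ symB n α β, x = d * ξ * d⁻¹}) ∧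
    (d ∈ CSet t0 α β ↔
      ∀ c c' : Cell lam, (c.2 : ℕ) = (c'.2 : ℕ) → c.1 ≠ c'.1 →
        TOf t0 α β d c = TOf t0 α β d c' → ∃ k, TOf t0 α β d c = dCol k) :=
  mem_CSet_iff_general n lam α β t0 d

end SignedYoung
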